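/- arXiv:1711.02562 — 5 statements merged into one kernel-verified Lean document; each statement's English description precedes it below -/
import Mathlib

section
/- Let G be a connected Lie group with solvable radical R. Then the maximal torus of the center of G equals the maximal torus of the center of R, i.e., T(G) = T(R). -/
/-- `T` is the maximal torus of the center of the topological group `G`: it is a compact
connected subgroup of the center, containing every compact connected subgroup of the
center. -/
def IsMaxCentralTorus {G : Type*} [Group G] [TopologicalSpace G] (T : Subgroup G) : Prop :=
  T ≤ Subgroup.center G ∧ IsCompact (T : Set G) ∧ IsConnected (T : Set G) ∧
    ∀ S : Subgroup G, S ≤ Subgroup.center G → IsCompact (S : Set G) →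
      IsConnected (S : Set G) → S ≤ T

/-- `R` is the solvable radical of the topological group `G`: it is a connected solvable
normal subgroup containing every connected solvable normal subgroup. -/
def IsSolvableRadical {G : Type*} [Group G] [TopologicalSpace G] (R : Subgroup G) : Prop :=
  R.Normal ∧ IsSolvable R ∧ IsConnected (R : Set G) ∧
    ∀ S : Subgroup G, S.Normal → IsSolvable S → IsConnected (S : Set G) → S ≤ R

open Set Filter Topology Metric

/-- A Lie group has no small subgroups: some neighbourhood of `1` contains no nontrivial
subgroup.  This is proven from scratch: in the chart at `1`, the derivative of
multiplication is addition, hence squaring (roughly) doubles the chart coordinate and any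
element of a small subgroup would have unbounded iterated squares. -/

theorem MCT_nss {E : Type*} [NormedAddCommGroup E] [NormedSpace ℝ E]
    {H : Type*} [TopologicalSpace H] (I : ModelWithCorners ℝ E H)
    {G : Type*} [TopologicalSpace G] [ChartedSpace H G] [Group G] [LieGroup I (⊤ : ℕ∞) G] :
    ∃ U ∈ 𝓝 (1 : G), ∀ S : Subgroup G, (S : Set G) ⊆ U → S = ⊥ := by
  classical
  set c := extChartAt I (1 : G) with hc
  set o := c 1 with ho
  set f : E × E → E := fun p => c ((c.symm p.1) * (c.symm p.2)) with hf
  -- differentiability of multiplication in the chart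
  have hmul : ContMDiffAt (I.prod I) I ((⊤ : ℕ∞) : WithTop ℕ∞) (fun p : G × G => p.1 * p.2) (1, 1) :=
    (contMDiff_mul I ((⊤ : ℕ∞) : WithTop ℕ∞)).contMDiffAt
  rw [contMDiffAt_iff] at hmul
  obtain ⟨-, hdiff⟩ := hmul
  have hfun : (extChartAt I ((fun p : G × G => p.1 * p.2) ((1:G), (1:G))) ∘
      (fun p : G × G => p.1 * p.2) ∘ (extChartAt (I.prod I) ((1 : G), (1 : G))).symm) = f := by
    funext p
    show extChartAt I ((1:G)*1) ((c.symm p.1) * (c.symm p.2)) = f p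
    rw [mul_one]
  have hpt : (extChartAt (I.prod I) ((1:G), (1:G))) ((1:G), (1:G)) = (o, o) := rfl
  rw [hfun, hpt] at hdiff
  have hdiff' : DifferentiableWithinAt ℝ f (range (I.prod I)) (o, o) :=
    hdiff.differentiableWithinAt (by simp)
  obtain ⟨L, hL⟩ : ∃ L : E × E →L[ℝ] E, HasFDerivWithinAt f L (range (I.prod I)) (o, o) :=
    ⟨_, hdiff'.hasFDerivWithinAt⟩
  set Ω := c.target with hΩ
  have ho' : o ∈ Ω := mem_extChartAt_target (1 : G)
  have hΩsub : Ω ×ˢ Ω ⊆ range (I.prod I) := by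
    rw [ModelWithCorners.range_prod]
    exact Set.prod_mono (extChartAt_target_subset_range 1) (extChartAt_target_subset_range 1)
  have hL' : HasFDerivWithinAt f L (Ω ×ˢ Ω) (o, o) := hL.mono hΩsub
  have hsymm_o : c.symm o = 1 := extChartAt_to_inv (1 : G)
  have hUD : UniqueDiffWithinAt ℝ Ω o := uniqueDiffWithinAt_extChartAt_target (1 : G)
  -- the derivative is addition
  have hLadd : ∀ x y : E, L (x, y) = x + y := by
    have h₁ : HasFDerivWithinAt (fun x : E => (x, o))
        ((ContinuousLinearMap.id ℝ E).prod (0 : E →L[ℝ] E)) Ω o :=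
      (HasFDerivAt.prodMk (hasFDerivAt_id o) (hasFDerivAt_const o o)).hasFDerivWithinAt
    have h₂ : HasFDerivWithinAt (fun y : E => (o, y))
        ((0 : E →L[ℝ] E).prod (ContinuousLinearMap.id ℝ E)) Ω o :=
      (HasFDerivAt.prodMk (hasFDerivAt_const o o) (hasFDerivAt_id o)).hasFDerivWithinAt
    have m₁ : MapsTo (fun x : E => (x, o)) Ω (Ω ×ˢ Ω) := fun x hx => ⟨hx, ho'⟩
    have m₂ : MapsTo (fun y : E => (o, y)) Ω (Ω ×ˢ Ω) := fun y hy => ⟨ho', hy⟩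
    have hc₁ : HasFDerivWithinAt (fun x : E => f (x, o))
        (L.comp ((ContinuousLinearMap.id ℝ E).prod 0)) Ω o := HasFDerivWithinAt.comp (f := fun x : E => (x, o)) o hL' h₁ m₁
    have hc₂ : HasFDerivWithinAt (fun y : E => f (o, y))
        (L.comp ((0 : E →L[ℝ] E).prod (ContinuousLinearMap.id ℝ E))) Ω o := HasFDerivWithinAt.comp (f := fun y : E => (o, y)) o hL' h₂ m₂
    have e₁ : ∀ x ∈ Ω, f (x, o) = x := by
      intro x hx
      show c ((c.symm x) * (c.symm o)) = x
      rw [hsymm_o, mul_one, c.right_inv hx]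
    have e₂ : ∀ y ∈ Ω, f (o, y) = y := by
      intro y hy
      show c ((c.symm o) * (c.symm y)) = y
      rw [hsymm_o, one_mul, c.right_inv hy]
    have hid₁ : HasFDerivWithinAt (fun x : E => x)
        (L.comp ((ContinuousLinearMap.id ℝ E).prod 0)) Ω o :=
      hc₁.congr (fun y hy => (e₁ y hy).symm) (e₁ o ho').symm
    have hid₂ : HasFDerivWithinAt (fun y : E => y)
        (L.comp ((0 : E →L[ℝ] E).prod (ContinuousLinearMap.id ℝ E))) Ω o :=
      hc₂.congr (fun y hy => (e₂ y hy).symm) (e₂ o ho').symm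
    have u₁ : L.comp ((ContinuousLinearMap.id ℝ E).prod 0) = ContinuousLinearMap.id ℝ E :=
      hUD.eq hid₁ (hasFDerivWithinAt_id o Ω)
    have u₂ : L.comp ((0 : E →L[ℝ] E).prod (ContinuousLinearMap.id ℝ E)) =
        ContinuousLinearMap.id ℝ E :=
      hUD.eq hid₂ (hasFDerivWithinAt_id o Ω)
    intro x y
    have hx : L (x, 0) = x := by
      have := congrArg (fun T : E →L[ℝ] E => T x) u₁
      simpa using this
    have hy : L (0, y) = y := by
      have := congrArg (fun T : E →L[ℝ] E => T y) u₂
      simpa using this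
    have : (x, y) = ((x, 0) : E × E) + (0, y) := by simp
    rw [this, map_add, hx, hy]
  -- quantitative estimate
  have hfo : f (o, o) = o := by
    show c ((c.symm o) * (c.symm o)) = o
    rw [hsymm_o, mul_one]
  have hlittle := hL'.isLittleO.def (by norm_num : (0:ℝ) < 1/4)
  rw [Filter.eventually_iff, mem_nhdsWithin] at hlittle
  obtain ⟨u, huo, huu, husub⟩ := hlittle
  obtain ⟨δ, hδpos, hball⟩ := Metric.isOpen_iff.mp huo (o, o) huu
  -- the small neighbourhood
  refine ⟨c.source ∩ c ⁻¹' Metric.ball o δ, ?_, ?_⟩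
  · exact Filter.inter_mem (extChartAt_source_mem_nhds 1)
      ((continuousAt_extChartAt 1).preimage_mem_nhds (Metric.ball_mem_nhds o hδpos))
  · intro S hS
    rw [Subgroup.eq_bot_iff_forall]
    intro g hgS
    by_contra hg1
    set a := ‖c g - o‖ with ha
    have hgU := hS hgS
    have hgsrc : g ∈ c.source := hgU.1
    have hapos : 0 < a := by
      rcases eq_or_lt_of_le (norm_nonneg (c g - o)) with h | h
      · exfalso
        apply hg1
        have : c g = c 1 := by
          have := sub_eq_zero.mp (norm_eq_zero.mp h.symm)
          rw [this, ho]
        exact c.injOn hgsrc (mem_extChartAt_source 1) this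
      · exact h
    -- key doubling step
    have hstep : ∀ h : G, h ∈ c.source → ‖c h - o‖ < δ →
        (3/2 : ℝ) * ‖c h - o‖ ≤ ‖c (h * h) - o‖ := by
      intro h hhsrc hhδ
      set v := c h - o with hv
      have hmem : ((c h, c h) : E × E) ∈ u ∩ Ω ×ˢ Ω := by
        constructor
        · apply hball
          rw [Metric.mem_ball]
          have : dist ((c h, c h) : E × E) (o, o) = ‖c h - o‖ := by
            rw [Prod.dist_eq, dist_eq_norm, max_self]
          rw [this]; exact hhδ
        · exact ⟨c.map_source hhsrc, c.map_source hhsrc⟩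
      have hest := husub hmem
      simp only [Set.mem_setOf_eq] at hest
      have hfp : f (c h, c h) = c (h * h) := by
        show c ((c.symm (c h)) * (c.symm (c h))) = c (h * h)
        rw [c.left_inv hhsrc]
      have hLp : L ((c h, c h) - (o, o)) = v + v := by
        have : ((c h, c h) : E × E) - (o, o) = (v, v) := rfl
        rw [this, hLadd]
      have hnorm : ‖((c h, c h) : E × E) - (o, o)‖ = ‖v‖ := by
        have : ((c h, c h) : E × E) - (o, o) = (v, v) := rfl
        rw [this, Prod.norm_def, max_self]
      rw [hfp, hfo, hLp, hnorm] at hest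
      have hvv : ‖v + v‖ = 2 * ‖v‖ := by
        have : v + v = (2:ℝ) • v := by rw [two_smul]
        rw [this, norm_smul]
        simp
      have habs := abs_le.mp (abs_norm_sub_norm_le (c (h * h) - o) (v + v))
      linarith [habs.1, norm_nonneg v]
    -- iterate
    have hiter : ∀ n : ℕ, (3/2 : ℝ)^n * a ≤ ‖c (g^(2^n)) - o‖ := by
      intro n
      induction n with
      | zero => simp [ha]
      | succ n ih =>
        have hmemS : g^(2^n) ∈ S := S.pow_mem hgS _
        have hmemU := hS hmemS
        have hsrc : g^(2^n) ∈ c.source := hmemU.1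
        have hlt : ‖c (g^(2^n)) - o‖ < δ := by
          have := hmemU.2
          rwa [Set.mem_preimage, Metric.mem_ball, dist_eq_norm] at this
        have hpow : g^(2^(n+1)) = g^(2^n) * g^(2^n) := by
          rw [pow_succ, pow_mul, sq]
        calc (3/2 : ℝ)^(n+1) * a = (3/2) * ((3/2)^n * a) := by ring
          _ ≤ (3/2) * ‖c (g^(2^n)) - o‖ := by
              have : (0:ℝ) ≤ 3/2 := by norm_num
              nlinarith
          _ ≤ ‖c (g^(2^n) * g^(2^n)) - o‖ := hstep _ hsrc hlt
          _ = ‖c (g^(2^(n+1))) - o‖ := by rw [hpow]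
    obtain ⟨n, hn⟩ := pow_unbounded_of_one_lt (δ / a) (by norm_num : (1:ℝ) < 3/2)
    have h1 : δ < (3/2:ℝ)^n * a := (div_lt_iff₀ hapos).mp hn
    have hmemU := hS (S.pow_mem hgS (2^n))
    have hlt : ‖c (g^(2^n)) - o‖ < δ := by
      have := hmemU.2
      rwa [Set.mem_preimage, Metric.mem_ball, dist_eq_norm] at this
    linarith [hiter n]

/-- Let `G` be a connected Lie group with solvable radical `R`. Then the
maximal torus of the center of `G` coincides with the maximal torus of the center of `R`:
`T(G) = T(R)`. -/
theorem maxCentralTorus_eq_maxCentralTorus_solvableRadical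
    {E : Type*} [NormedAddCommGroup E] [NormedSpace ℝ E] [FiniteDimensional ℝ E]
    {H : Type*} [TopologicalSpace H] (I : ModelWithCorners ℝ E H)
    (G : Type*) [TopologicalSpace G] [ChartedSpace H G] [Group G] [LieGroup I (⊤ : ℕ∞) G]
    [ConnectedSpace G]
    (R : Subgroup G) (hR : IsSolvableRadical R)
    (TG : Subgroup G) (hTG : IsMaxCentralTorus TG)
    (TR : Subgroup R) (hTR : IsMaxCentralTorus TR) :
    TG = TR.map R.subtype := by
  haveI : IsTopologicalGroup G := topologicalGroup_of_lieGroup I ((⊤ : ℕ∞) : WithTop ℕ∞)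
  obtain ⟨hTGc, hTGcpt, hTGconn, hTGmax⟩ := hTG
  obtain ⟨hRn, hRsolv, hRconn, hRmax⟩ := hR
  obtain ⟨hTRc, hTRcpt, hTRconn, hTRmax⟩ := hTR
  set Z := TR.map R.subtype with hZ
  -- `TG ≤ R`
  have hTGnormal : TG.Normal := by
    constructor
    intro n hn g
    have h := Subgroup.mem_center_iff.mp (hTGc hn) g
    have : g * n * g⁻¹ = n := by rw [h, mul_inv_cancel_right]
    rwa [this]
  have hTGsolv : IsSolvable TG := by
    letI : CommGroup TG :=
      { (inferInstance : Group TG) with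
        mul_comm := fun a b => Subtype.ext (Subgroup.mem_center_iff.mp (hTGc a.2) b.1).symm }
    exact (inferInstance : Group.IsSolvable TG)
  have hTGR : TG ≤ R := hRmax TG hTGnormal hTGsolv hTGconn
  -- `TG ≤ Z` via the comap in `R`
  have hTGsub : TG ≤ Z := by
    set S0 := TG.comap R.subtype with hS0
    have hS0set : (Subtype.val '' (S0 : Set R)) = (TG : Set G) := by
      rw [Subgroup.coe_comap, Subgroup.coe_subtype, Set.image_preimage_eq_inter_range,
        Subtype.range_coe]
      exact Set.inter_eq_left.mpr hTGR
    have hS0c : S0 ≤ Subgroup.center R := by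
      rintro ⟨x, hxR⟩ hx
      rw [Subgroup.mem_center_iff]
      rintro ⟨y, hyR⟩
      exact Subtype.ext (Subgroup.mem_center_iff.mp (hTGc hx) y)
    have hS0cpt : IsCompact (S0 : Set R) := by
      rw [Topology.IsEmbedding.subtypeVal.isCompact_iff, hS0set]
      exact hTGcpt
    have hS0conn : IsConnected (S0 : Set R) := by
      refine ⟨⟨1, S0.one_mem⟩, ?_⟩
      have himg : IsPreconnected (Subtype.val '' (S0 : Set R)) := by
        rw [hS0set]; exact hTGconn.2
      exact Topology.IsInducing.subtypeVal.isPreconnected_image.mp himg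
    have hS0TR : S0 ≤ TR := hTRmax S0 hS0c hS0cpt hS0conn
    intro x hx
    exact ⟨⟨x, hTGR hx⟩, hS0TR hx, rfl⟩
  -- properties of `Z`
  have hZR : ∀ z ∈ Z, z ∈ R := by
    rintro z ⟨t, ht, rfl⟩
    exact t.2
  have hZcommR : ∀ z ∈ Z, ∀ r ∈ R, z * r = r * z := by
    rintro z ⟨t, ht, rfl⟩ r hr
    have := Subgroup.mem_center_iff.mp (hTRc ht) ⟨r, hr⟩
    exact (congrArg Subtype.val this).symm
  have hZab : ∀ z ∈ Z, ∀ w ∈ Z, Commute z w := by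
    intro z hz w hw
    exact (hZcommR w hw z (hZR z hz)).symm
  have hZset : (Z : Set G) = Subtype.val '' (TR : Set R) := by
    rw [hZ, Subgroup.coe_map, Subgroup.coe_subtype]
  have hZcpt : IsCompact (Z : Set G) := by
    rw [hZset]; exact hTRcpt.image continuous_subtype_val
  have hZconn : IsConnected (Z : Set G) := by
    rw [hZset]; exact hTRconn.image _ continuous_subtype_val.continuousOn
  -- `Z` is invariant under conjugation
  have hconj : ∀ g : G, ∀ z ∈ Z, g * z * g⁻¹ ∈ Z := by
    intro g
    set ρ : R →* R :=
      { toFun := fun r => ⟨g * r * g⁻¹, hRn.conj_mem r r.2 g⟩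
        map_one' := by ext; simp
        map_mul' := fun r s => by ext; simp [mul_assoc] } with hρ
    have hρcont : Continuous ρ := by
      apply Continuous.subtype_mk
      exact ((continuous_mul_left g).comp continuous_subtype_val).mul continuous_const
    set S' := TR.map ρ with hS'
    have hS'c : S' ≤ Subgroup.center R := by
      rintro x ⟨t, ht, rfl⟩
      rw [Subgroup.mem_center_iff]
      rintro ⟨u, huR⟩
      have hw : g⁻¹ * u * g ∈ R := by
        have := hRn.conj_mem u huR g⁻¹
        rwa [inv_inv] at this
      have h := congrArg Subtype.val (Subgroup.mem_center_iff.mp (hTRc ht) ⟨g⁻¹ * u * g, hw⟩)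
      -- h : (g⁻¹ * u * g) * t = t * (g⁻¹ * u * g)  (in G)
      apply Subtype.ext
      show u * (g * (t : G) * g⁻¹) = (g * (t : G) * g⁻¹) * u
      have h2 := congrArg (fun x => g * x * g⁻¹) h
      simpa [mul_assoc] using h2
    have hS'cpt : IsCompact (S' : Set R) := by
      rw [hS', Subgroup.coe_map]
      exact hTRcpt.image hρcont
    have hS'conn : IsConnected (S' : Set R) := by
      rw [hS', Subgroup.coe_map]
      exact hTRconn.image _ hρcont.continuousOn
    have hS'TR : S' ≤ TR := hTRmax S' hS'c hS'cpt hS'conn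
    rintro z ⟨t, ht, rfl⟩
    have : ρ t ∈ TR := hS'TR ⟨t, ht, rfl⟩
    exact ⟨ρ t, this, rfl⟩
  -- no-small-subgroups + tube lemma: `Z` is central
  obtain ⟨U, hU1, hUnss⟩ := MCT_nss I (G := G)
  obtain ⟨U', hU'sub, hU'open, h1U'⟩ := mem_nhds_iff.mp hU1
  have hcont : Continuous (fun p : G × G => p.1 * p.2 * p.1⁻¹ * p.2⁻¹) := by
    fun_prop
  have hsub : ({(1 : G)} : Set G) ×ˢ (Z : Set G) ⊆
      (fun p : G × G => p.1 * p.2 * p.1⁻¹ * p.2⁻¹) ⁻¹' U' := by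
    rintro ⟨x, z⟩ ⟨hx, hz⟩
    rcases hx with rfl
    simp [h1U']
  obtain ⟨v, w, hvopen, -, h1v, hZw, hvw⟩ :=
    generalized_tube_lemma isCompact_singleton hZcpt (hU'open.preimage hcont) hsub
  have hcentral : ∀ g ∈ v, ∀ z ∈ Z, g * z = z * g := by
    intro g hg
    set ψ : Z →* G :=
      { toFun := fun z => g * z * g⁻¹ * (z : G)⁻¹
        map_one' := by simp
        map_mul' := by
          rintro ⟨z, hz⟩ ⟨w', hw'⟩
          have hz' : g * z * g⁻¹ ∈ Z := hconj g z hz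
          have hw'' : g * w' * g⁻¹ ∈ Z := hconj g w' hw'
          show g * ↑(_ * _) * g⁻¹ * (↑(_ * _) : G)⁻¹ = _
          push_cast
          have hcomm : (g * w' * g⁻¹ * w'⁻¹) * z⁻¹ = z⁻¹ * (g * w' * g⁻¹ * w'⁻¹) := by
            have c1 : Commute z (g * w' * g⁻¹) := hZab z hz _ hw''
            have c2 : Commute z w'⁻¹ := (hZab z hz w' hw').inv_right
            exact ((c1.mul_right c2).inv_left.eq).symm
          calc g * (z * w') * g⁻¹ * (z * w')⁻¹
              = (g * z * g⁻¹) * ((g * w' * g⁻¹ * w'⁻¹) * z⁻¹) := by group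
            _ = (g * z * g⁻¹) * (z⁻¹ * (g * w' * g⁻¹ * w'⁻¹)) := by rw [hcomm]
            _ = g * z * g⁻¹ * z⁻¹ * (g * w' * g⁻¹ * w'⁻¹) := by group } with hψ
    have hrange : (ψ.range : Set G) ⊆ U := by
      rintro x ⟨⟨z, hz⟩, rfl⟩
      apply hU'sub
      have : ((g, z) : G × G) ∈ v ×ˢ w := ⟨hg, hZw hz⟩
      exact hvw this
    have hbot := hUnss ψ.range hrange
    intro z hz
    have : ψ ⟨z, hz⟩ = 1 := by
      have : ψ ⟨z, hz⟩ ∈ ψ.range := ⟨⟨z, hz⟩, rfl⟩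
      rw [hbot] at this
      exact Subgroup.mem_bot.mp this
    have h1 : g * z * g⁻¹ * z⁻¹ = 1 := this
    have h2 : g * z * g⁻¹ = z := by
      have := mul_inv_eq_one.mp h1
      exact this
    calc g * z = (g * z * g⁻¹) * g := by rw [inv_mul_cancel_right]
      _ = z * g := by rw [h2]
  -- the centralizer of `Z` is open, hence everything
  have hZcentral : Z ≤ Subgroup.center G := by
    set C := Subgroup.centralizer (Z : Set G) with hC
    have hvC : v ⊆ (C : Set G) := by
      intro g hg
      have : g ∈ C := Subgroup.mem_centralizer_iff.mpr fun z hz => (hcentral g hg z hz).symm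
      exact this
    have hCnhds : (C : Set G) ∈ 𝓝 (1 : G) :=
      Filter.mem_of_superset (hvopen.mem_nhds (h1v (Set.mem_singleton 1))) hvC
    have hCopen : IsOpen (C : Set G) := Subgroup.isOpen_of_mem_nhds C hCnhds
    have hCclosed : IsClosed (C : Set G) := C.isClosed_of_isOpen hCopen
    have hCuniv : (C : Set G) = Set.univ :=
      IsClopen.eq_univ ⟨hCclosed, hCopen⟩ ⟨1, C.one_mem⟩
    intro z hz
    rw [Subgroup.mem_center_iff]
    intro g
    have hgC : g ∈ C := by
      have : g ∈ (C : Set G) := by rw [hCuniv]; trivial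
      exact this
    exact (Subgroup.mem_centralizer_iff.mp hgC z hz).symm
  exact le_antisymm hTGsub (hTGmax Z hZcentral hZcpt hZconn)
end

section
/- Let G be a connected Lie group with solvable radical R. Then R/T(R) is the solvable radical of G/T(G), and the maximal torus of the center of G/T(G) is trivial. -/
open scoped Topology
open Set Filter Pointwise

/-- A Lie group has no small subgroups. -/
theorem lie_nss {E : Type*} [NormedAddCommGroup E] [NormedSpace ℝ E]
  {H : Type*} [TopologicalSpace H] (I : ModelWithCorners ℝ E H)
  (G : Type*) [TopologicalSpace G] [ChartedSpace H G] [Group G] [LieGroup I (⊤ : ℕ∞) G] : ∃ U ∈ 𝓝 (1 : G), ∀ S : Subgroup G, (S : Set G) ⊆ U → S = ⊥ := by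
  classical
  set e := extChartAt I (1 : G) with he
  set x₀ := e 1 with hx₀
  have h1mem : (1 : G) ∈ e.source := mem_extChartAt_source (I := I) 1
  have hx₀t : x₀ ∈ e.target := e.map_source h1mem
  have htr : e.target ⊆ range I := extChartAt_target_subset_range (I := I) 1
  -- smoothness of multiplication read in charts
  have hsm : ContMDiffAt (I.prod I) I (↑(⊤ : ℕ∞)) (fun p : G × G => p.1 * p.2) (1, 1) :=
    (contMDiff_mul (I := I) (G := G) (n := ((⊤ : ℕ∞) : WithTop ℕ∞))).contMDiffAt
  rw [contMDiffAt_iff] at hsm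
  obtain ⟨-, hd⟩ := hsm
  have hd' : ContDiffWithinAt ℝ (↑(⊤ : ℕ∞)) (fun p : E × E => e (e.symm p.1 * e.symm p.2))
      (range I ×ˢ range I) (x₀, x₀) := by
    rw [extChartAt_prod] at hd
    simp only [PartialEquiv.prod_symm, PartialEquiv.prod_coe, PartialEquiv.prod_coe_symm,
      Function.comp, one_mul] at hd
    rw [ModelWithCorners.range_prod] at hd
    exact hd
  -- derivative of multiplication-in-chart at (x₀, x₀)
  have h1n : (1 : WithTop ℕ∞) ≤ ↑(⊤ : ℕ∞) := by exact_mod_cast le_top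
  have hA : HasFDerivWithinAt (fun p : E × E => e (e.symm p.1 * e.symm p.2))
      (fderivWithin ℝ (fun p : E × E => e (e.symm p.1 * e.symm p.2))
        (range I ×ˢ range I) (x₀, x₀)) (range I ×ˢ range I) (x₀, x₀) :=
    (hd'.differentiableWithinAt (by simp)).hasFDerivWithinAt
  set A := fderivWithin ℝ (fun p : E × E => e (e.symm p.1 * e.symm p.2))
      (range I ×ˢ range I) (x₀, x₀) with hAdef
  have hsymm1 : e.symm x₀ = 1 := e.left_inv h1mem
  have hm0 : e (e.symm x₀ * e.symm x₀) = x₀ := by rw [hsymm1, one_mul, hx₀]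
  have hml : ∀ v ∈ e.target, e (e.symm v * e.symm x₀) = v := by
    intro v hv; rw [hsymm1, mul_one, e.right_inv hv]
  have hmr : ∀ v ∈ e.target, e (e.symm x₀ * e.symm v) = v := by
    intro v hv; rw [hsymm1, one_mul, e.right_inv hv]
  have huniq : UniqueDiffWithinAt ℝ e.target x₀ := by
    have h1 : e.target ∈ 𝓝[range I] x₀ := extChartAt_target_mem_nhdsWithin (I := I) 1
    exact (I.uniqueDiffOn x₀ (htr hx₀t)).mono_nhds (nhdsWithin_le_of_mem h1)
  have hB1 : A.comp ((ContinuousLinearMap.id ℝ E).prod 0) = ContinuousLinearMap.id ℝ E := by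
    have hg1 : HasFDerivWithinAt (fun v : E => (v, x₀))
        ((ContinuousLinearMap.id ℝ E).prod 0) e.target x₀ :=
      HasFDerivWithinAt.prodMk (hasFDerivWithinAt_id _ _) (hasFDerivWithinAt_const _ _ _)
    have hc1 : HasFDerivWithinAt
        ((fun p : E × E => e (e.symm p.1 * e.symm p.2)) ∘ (fun v : E => (v, x₀)))
        (A.comp ((ContinuousLinearMap.id ℝ E).prod 0)) e.target x₀ :=
      HasFDerivWithinAt.comp (g := fun p : E × E => e (e.symm p.1 * e.symm p.2))
        (f := fun v : E => (v, x₀)) x₀ hA hg1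
        (fun v hv => Set.mk_mem_prod (htr hv) (htr hx₀t))
    have h' : HasFDerivWithinAt (fun v : E => v)
        (A.comp ((ContinuousLinearMap.id ℝ E).prod 0)) e.target x₀ :=
      hc1.congr (fun v hv => (hml v hv).symm) (hml x₀ hx₀t).symm
    exact huniq.eq h' (hasFDerivWithinAt_id _ _)
  have hB2 : A.comp ((0 : E →L[ℝ] E).prod (ContinuousLinearMap.id ℝ E)) =
      ContinuousLinearMap.id ℝ E := by
    have hg2 : HasFDerivWithinAt (fun v : E => (x₀, v))
        ((0 : E →L[ℝ] E).prod (ContinuousLinearMap.id ℝ E)) e.target x₀ :=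
      HasFDerivWithinAt.prodMk (hasFDerivWithinAt_const _ _ _) (hasFDerivWithinAt_id _ _)
    have hc2 : HasFDerivWithinAt
        ((fun p : E × E => e (e.symm p.1 * e.symm p.2)) ∘ (fun v : E => (x₀, v)))
        (A.comp ((0 : E →L[ℝ] E).prod (ContinuousLinearMap.id ℝ E))) e.target x₀ :=
      HasFDerivWithinAt.comp (g := fun p : E × E => e (e.symm p.1 * e.symm p.2))
        (f := fun v : E => (x₀, v)) x₀ hA hg2
        (fun v hv => Set.mk_mem_prod (htr hx₀t) (htr hv))
    have h' : HasFDerivWithinAt (fun v : E => v)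
        (A.comp ((0 : E →L[ℝ] E).prod (ContinuousLinearMap.id ℝ E))) e.target x₀ :=
      hc2.congr (fun v hv => (hmr v hv).symm) (hmr x₀ hx₀t).symm
    exact huniq.eq h' (hasFDerivWithinAt_id _ _)
  have hA2 : ∀ u : E, A (u, u) = u + u := by
    intro u
    have e1 : A (u, (0 : E)) = u := by
      have := ContinuousLinearMap.ext_iff.mp hB1 u
      simpa using this
    have e2 : A ((0 : E), u) = u := by
      have := ContinuousLinearMap.ext_iff.mp hB2 u
      simpa using this
    have : (u, u) = ((u, (0 : E)) + ((0 : E), u)) := by simp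
    rw [this, map_add, e1, e2]
  -- derivative of the squaring map in chart
  have hq : HasFDerivWithinAt (fun v : E => e (e.symm v * e.symm v))
      (A.comp ((ContinuousLinearMap.id ℝ E).prod (ContinuousLinearMap.id ℝ E)))
      e.target x₀ := by
    have hdg : HasFDerivWithinAt (fun v : E => (v, v))
        ((ContinuousLinearMap.id ℝ E).prod (ContinuousLinearMap.id ℝ E)) e.target x₀ :=
      HasFDerivWithinAt.prodMk (hasFDerivWithinAt_id _ _) (hasFDerivWithinAt_id _ _)
    exact HasFDerivWithinAt.comp (g := fun p : E × E => e (e.symm p.1 * e.symm p.2))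
      (f := fun v : E => (v, v)) x₀ hA hdg (fun v hv => Set.mk_mem_prod (htr hv) (htr hv))
  have ho := hq.isLittleO.def (by norm_num : (0:ℝ) < 1/2)
  rw [eventually_nhdsWithin_iff] at ho
  obtain ⟨O, hO, hOopen, hx₀O⟩ := eventually_nhds_iff.mp ho
  refine ⟨e.source ∩ e ⁻¹' (O ∩ Metric.ball x₀ 1), ?_, ?_⟩
  · refine Filter.inter_mem (extChartAt_source_mem_nhds (I := I) 1) ?_
    exact (continuousAt_extChartAt (I := I) 1).preimage_mem_nhds
      ((hOopen.inter Metric.isOpen_ball).mem_nhds ⟨hx₀O, Metric.mem_ball_self one_pos⟩)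
  · intro S hS
    rw [eq_bot_iff]
    intro x hx
    -- the squaring estimate
    have key : ∀ g : G, g ∈ e.source → e g ∈ O → g * g ∈ e.source →
        (3/2 : ℝ) * ‖e g - x₀‖ ≤ ‖e (g * g) - x₀‖ := by
      intro g hg hgO hgg
      have hvt : e g ∈ e.target := e.map_source hg
      have hineq := hO (e g) hgO hvt
      have hsv : e.symm (e g) = g := e.left_inv hg
      rw [hsv] at hineq
      set w := e g - x₀ with hw
      set b := e (g * g) - x₀ with hb
      have hval : (A.comp ((ContinuousLinearMap.id ℝ E).prod
          (ContinuousLinearMap.id ℝ E))) (e g - x₀) = w + w := by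
        simpa using hA2 (e g - x₀)
      rw [hm0, hval] at hineq
      have hnw : ‖w + w‖ = 2 * ‖w‖ := by
        rw [← two_smul ℝ w, norm_smul]; simp
      have h3 : ‖w + w‖ ≤ ‖(w + w) - b‖ + ‖b‖ := by
        simpa using norm_add_le ((w + w) - b) b
      have h4 : ‖(w + w) - b‖ = ‖b - (w + w)‖ := norm_sub_rev _ _
      have h5 : ‖b - (w + w)‖ ≤ 1/2 * ‖w‖ := hineq
      linarith
    have hpow : ∀ n : ℕ, x ^ (2 ^ n) ∈
        e.source ∩ e ⁻¹' (O ∩ Metric.ball x₀ 1) := fun n => hS (pow_mem hx _)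
    have grow : ∀ n : ℕ, (3/2 : ℝ) ^ n * ‖e x - x₀‖ ≤ ‖e (x ^ 2 ^ n) - x₀‖ := by
      intro n
      induction n with
      | zero => simp
      | succ n ih =>
        have hsq : x ^ 2 ^ (n + 1) = x ^ 2 ^ n * x ^ 2 ^ n := by
          rw [← pow_add]
          congr 1
          ring
        calc (3/2 : ℝ) ^ (n+1) * ‖e x - x₀‖ = 3/2 * ((3/2) ^ n * ‖e x - x₀‖) := by ring
          _ ≤ 3/2 * ‖e (x ^ 2 ^ n) - x₀‖ := by
              have : (0:ℝ) ≤ 3/2 := by norm_num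
              nlinarith [ih]
          _ ≤ ‖e (x ^ 2 ^ (n+1)) - x₀‖ := by
              rw [hsq]
              exact key _ (hpow n).1 (hpow n).2.1 (hsq ▸ (hpow (n+1)).1)
    have hb : ∀ n : ℕ, ‖e (x ^ 2 ^ n) - x₀‖ < 1 := by
      intro n
      have := (hpow n).2.2
      rwa [Metric.mem_ball, dist_eq_norm] at this
    have hr : ‖e x - x₀‖ = 0 := by
      by_contra h
      have hrpos : 0 < ‖e x - x₀‖ := lt_of_le_of_ne (norm_nonneg _) (Ne.symm h)
      obtain ⟨n, hn⟩ := pow_unbounded_of_one_lt (1 / ‖e x - x₀‖) (by norm_num : (1:ℝ) < 3/2)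
      have h1 : 1 < (3/2 : ℝ) ^ n * ‖e x - x₀‖ := by
        rw [div_lt_iff₀ hrpos] at hn
        linarith
      have := grow n
      have := hb n
      linarith
    have hex : e x = x₀ := by
      rw [← sub_eq_zero]
      exact norm_eq_zero.mp hr
    have : x = 1 := e.injOn (hS hx).1 h1mem (by rw [hex, hx₀])
    simpa [Subgroup.mem_bot] using this

/-- A Lie group is Hausdorff. -/
theorem t2space_of_lieGroup {E : Type*} [NormedAddCommGroup E] [NormedSpace ℝ E]
    {H : Type*} [TopologicalSpace H] (I : ModelWithCorners ℝ E H)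
    (G : Type*) [TopologicalSpace G] [ChartedSpace H G] [Group G] [LieGroup I (⊤ : ℕ∞) G] :
    T2Space G := by
  haveI : IsTopologicalGroup G := topologicalGroup_of_lieGroup I (⊤ : ℕ∞)
  haveI : T2Space H := I.isClosedEmbedding.toIsEmbedding.t2Space
  apply (IsTopologicalGroup.t2Space_iff_one_closed (G := G)).mpr
  rw [← isOpen_compl_iff, isOpen_iff_forall_mem_open]
  intro g hg
  have hgne : g ≠ 1 := by simpa using hg
  by_cases h1c : (1 : G) ∈ (chartAt H g).source
  · have hne : chartAt H g g ≠ chartAt H g 1 := by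
      intro h
      exact hgne ((chartAt H g).injOn (mem_chart_source H g) h1c h)
    obtain ⟨u, v, hu, hv, hgu, h1v, huv⟩ := t2_separation hne
    refine ⟨(chartAt H g).source ∩ (chartAt H g) ⁻¹' u, ?_, ?_, ?_⟩
    · intro y hy
      simp only [mem_compl_iff, mem_singleton_iff]
      rintro rfl
      exact Set.disjoint_left.mp huv hy.2 h1v
    · exact (chartAt H g).continuousOn.isOpen_inter_preimage (chartAt H g).open_source hu
    · exact ⟨mem_chart_source H g, hgu⟩
  · refine ⟨(chartAt H g).source, ?_, (chartAt H g).open_source, mem_chart_source H g⟩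
    intro y hy
    simp only [mem_compl_iff, mem_singleton_iff]
    rintro rfl
    exact h1c hy

section Aux
variable {G : Type*} [Group G] [TopologicalSpace G] [IsTopologicalGroup G]

/-- The preimage in `G` of a connected subgroup of `G ⧸ N` under the quotient map is
connected, provided `N` is connected. -/
theorem isConnected_comap_of_isConnected {N : Subgroup G} [N.Normal]
    (hN : IsConnected (N : Set G)) (S' : Subgroup (G ⧸ N))
    (hS' : IsConnected (S' : Set (G ⧸ N))) :
    IsConnected ((S'.comap (QuotientGroup.mk' N) : Subgroup G) : Set G) := by
  set P := S'.comap (QuotientGroup.mk' N) with hP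
  have hPset : (P : Set G) = (QuotientGroup.mk : G → G ⧸ N) ⁻¹' (S' : Set (G ⧸ N)) := rfl
  refine ⟨⟨1, one_mem P⟩, ?_⟩
  intro u v hu hv hcover ⟨a, haP, hau⟩ ⟨b, hbP, hbv⟩
  by_contra hempty
  rw [Set.not_nonempty_iff_eq_empty] at hempty
  -- each coset of `N` inside `P` is connected and contained in `u ∪ v`
  have hcoset_sub : ∀ g ∈ (P : Set G), (fun n => g * n) '' (N : Set G) ⊆ (P : Set G) := by
    rintro g hg - ⟨n, hn, rfl⟩
    have : (QuotientGroup.mk (g * n) : G ⧸ N) = QuotientGroup.mk g := by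
      rw [QuotientGroup.mk_mul]
      rw [(QuotientGroup.eq_one_iff n).mpr hn, mul_one]
    simpa [hPset, Set.mem_preimage, this] using hg
  have hcoset_conn : ∀ g : G, IsPreconnected ((fun n => g * n) '' (N : Set G)) :=
    fun g => hN.isPreconnected.image _ (continuous_mul_left g).continuousOn
  -- transfer the covering to the quotient
  have hopen : IsOpenMap (QuotientGroup.mk : G → G ⧸ N) := QuotientGroup.isOpenMap_coe
  have hS'cover : (S' : Set (G ⧸ N)) ⊆ QuotientGroup.mk '' u ∪ QuotientGroup.mk '' v := by
    intro t ht
    obtain ⟨g, rfl⟩ := QuotientGroup.mk_surjective t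
    rcases hcover ht with h | h
    · exact Or.inl ⟨g, h, rfl⟩
    · exact Or.inr ⟨g, h, rfl⟩
  obtain ⟨t, htS, ⟨c₁, hc₁u, hc₁⟩, c₂, hc₂v, hc₂⟩ :=
    hS'.isPreconnected (QuotientGroup.mk '' u) (QuotientGroup.mk '' v)
      (hopen u hu) (hopen v hv) hS'cover
      ⟨QuotientGroup.mk a, haP, ⟨a, hau, rfl⟩⟩ ⟨QuotientGroup.mk b, hbP, ⟨b, hbv, rfl⟩⟩
  -- `c₁` and `c₂` lie in the same coset of `N`
  have hc₁P : c₁ ∈ (P : Set G) := by rw [hPset]; simp only [Set.mem_preimage, hc₁]; exact htS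
  have hc₂P : c₂ ∈ (P : Set G) := by rw [hPset]; simp only [Set.mem_preimage, hc₂]; exact htS
  have hmem : c₁⁻¹ * c₂ ∈ N := QuotientGroup.eq.mp (hc₁.trans hc₂.symm)
  have hco := hcoset_conn c₁ u v hu hv
    ((hcoset_sub c₁ hc₁P).trans hcover)
    ⟨c₁, ⟨1, one_mem N, by simp⟩, hc₁u⟩
    ⟨c₂, ⟨c₁⁻¹ * c₂, hmem, by group⟩, hc₂v⟩
  obtain ⟨z, hz1, hz2⟩ := hco
  have : z ∈ (P : Set G) ∩ (u ∩ v) := ⟨hcoset_sub c₁ hc₁P hz1, hz2⟩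
  rw [hempty] at this
  exact this

/-- The preimage in `G` of a compact closed subgroup of `G ⧸ N` under the quotient map
is compact, provided `N` is compact and `G` is locally compact. -/
theorem isCompact_comap_of_isCompact [LocallyCompactSpace G] {N : Subgroup G} [N.Normal]
    (hN : IsCompact (N : Set G)) (S' : Subgroup (G ⧸ N))
    (hS' : IsCompact (S' : Set (G ⧸ N))) (hS'c : IsClosed (S' : Set (G ⧸ N))) :
    IsCompact ((S'.comap (QuotientGroup.mk' N) : Subgroup G) : Set G) := by
  set P := S'.comap (QuotientGroup.mk' N) with hPdef
  have hPset : (P : Set G) = (QuotientGroup.mk : G → G ⧸ N) ⁻¹' (S' : Set (G ⧸ N)) := rfl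
  -- choose compact neighbourhoods upstairs
  have hsec : ∀ t : G ⧸ N, ∃ g : G, QuotientGroup.mk g = t := QuotientGroup.mk_surjective.forall.mpr (fun g => ⟨g, rfl⟩)
  choose sec hsec using hsec
  have hcpt : ∀ t : G ⧸ N, ∃ K : Set G, IsCompact K ∧ K ∈ 𝓝 (sec t) :=
    fun t => exists_compact_mem_nhds (sec t)
  choose K hKc hKn using hcpt
  have hnb : ∀ t ∈ (S' : Set (G ⧸ N)), QuotientGroup.mk '' (K t) ∈ 𝓝 t := by
    intro t _
    have := QuotientGroup.isOpenMap_coe (N := N) |>.image_mem_nhds (hKn t)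
    rwa [hsec t] at this
  obtain ⟨F, hF⟩ := hS'.elim_nhds_subcover (fun t => QuotientGroup.mk '' (K t)) hnb
  have hKF : IsCompact (⋃ t ∈ F, K t) := F.finite_toSet.isCompact_biUnion (fun t _ => hKc t)
  have hsub : (P : Set G) ⊆ (⋃ t ∈ F, K t) * (N : Set G) := by
    intro p hp
    have hpS : (QuotientGroup.mk p : G ⧸ N) ∈ (S' : Set (G ⧸ N)) := hp
    obtain ⟨t, htF, k, hk, hkp⟩ := by
      have := hF.2 hpS
      simpa using this
    refine ⟨k, Set.mem_biUnion htF hk, k⁻¹ * p, ?_, by group⟩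
    have : (QuotientGroup.mk k : G ⧸ N) = QuotientGroup.mk p := hkp
    rwa [QuotientGroup.eq] at this
  have hclosed : IsClosed (P : Set G) := hS'c.preimage QuotientGroup.continuous_mk
  exact (hKF.mul hN).of_isClosed_subset hclosed hsub

end Aux

/-- Let `G` be a connected Lie group with solvable radical `R` and
maximal central torus `T(G)`.  Then the image of `R` in `G/T(G)` (that is, `R/T(R)`,
since `T(G) = T(R) ⊆ R`) is the solvable radical of `G/T(G)`, and the maximal torus of
the center of `G/T(G)` is trivial. -/
theorem solvableRadical_quotient_and_maxCentralTorus_of_quotient_trivial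
    {E : Type*} [NormedAddCommGroup E] [NormedSpace ℝ E] [FiniteDimensional ℝ E]
    {H : Type*} [TopologicalSpace H] (I : ModelWithCorners ℝ E H)
    (G : Type*) [TopologicalSpace G] [ChartedSpace H G] [Group G] [LieGroup I (⊤ : ℕ∞) G]
    [ConnectedSpace G]
    (R : Subgroup G) (hR : IsSolvableRadical R)
    (TG : Subgroup G) [TG.Normal] (hTG : IsMaxCentralTorus TG) :
    IsSolvableRadical (R.map (QuotientGroup.mk' TG)) ∧
      ∀ T' : Subgroup (G ⧸ TG), IsMaxCentralTorus T' → T' = ⊥ := by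
  haveI : IsTopologicalGroup G := topologicalGroup_of_lieGroup I (⊤ : ℕ∞)
  haveI : T2Space G := t2space_of_lieGroup I G
  haveI : LocallyCompactSpace H := I.locallyCompactSpace
  haveI : LocallyCompactSpace G := ChartedSpace.locallyCompactSpace H G
  obtain ⟨hTGc, hTGcpt, hTGconn, hTGmax⟩ := hTG
  obtain ⟨hRn, hRs, hRconn, hRmax⟩ := hR
  haveI : IsClosed (TG : Set G) := hTGcpt.isClosed
  haveI hTGsolv : Group.IsSolvable ↥TG := isSolvable_of_comm fun a b =>
    Subtype.ext ((Subgroup.mem_center_iff.mp (hTGc a.2) b.1).symm)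
  set π := QuotientGroup.mk' TG with hπdef
  have hπsurj : Function.Surjective π := QuotientGroup.mk'_surjective TG
  have hTGle : ∀ S' : Subgroup (G ⧸ TG), TG ≤ S'.comap π := by
    intro S' t ht
    have h1 : π t = 1 := (QuotientGroup.eq_one_iff t).mpr ht
    simp [Subgroup.mem_comap, h1, one_mem]
  have hsolv_comap : ∀ S' : Subgroup (G ⧸ TG), IsSolvable ↥S' → IsSolvable ↥(S'.comap π) := by
    intro S' hs
    haveI : Group.IsSolvable ↥S' := hs
    refine solvable_of_ker_le_range (Subgroup.inclusion (hTGle S'))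
      ((π.domRestrict (S'.comap π)).codRestrict S' (fun p => Subgroup.mem_comap.mp p.2)) ?_
    intro p hp
    rw [MonoidHom.mem_ker] at hp
    have hp1 : π p.1 = 1 := congrArg Subtype.val hp
    have hpTG : p.1 ∈ TG := (QuotientGroup.eq_one_iff p.1).mp hp1
    exact ⟨⟨p.1, hpTG⟩, Subtype.ext rfl⟩
  have hconn_comap : ∀ S' : Subgroup (G ⧸ TG), IsConnected (S' : Set (G ⧸ TG)) →
      IsConnected ((S'.comap π : Subgroup G) : Set G) :=
    fun S' h => isConnected_comap_of_isConnected hTGconn S' h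
  constructor
  · refine ⟨hRn.map π hπsurj, ?_, ?_, ?_⟩
    · haveI : Group.IsSolvable ↥R := hRs
      exact solvable_of_surjective (π.subgroupMap_surjective R)
    · rw [Subgroup.coe_map]
      exact hRconn.image _ (QuotientGroup.continuous_mk).continuousOn
    · intro S' hS'n hS's hS'conn
      have hPR : S'.comap π ≤ R :=
        hRmax _ (hS'n.comap π) (hsolv_comap S' hS's) (hconn_comap S' hS'conn)
      calc S' = (S'.comap π).map π :=
            (Subgroup.map_comap_eq_self_of_surjective hπsurj S').symm
        _ ≤ R.map π := Subgroup.map_mono hPR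
  · intro T' hT'
    obtain ⟨hT'c, hT'cpt, hT'conn, -⟩ := hT'
    set P := T'.comap π with hPdef
    have hT'closed : IsClosed (T' : Set (G ⧸ TG)) := hT'cpt.isClosed
    have hPcpt : IsCompact (P : Set G) :=
      isCompact_comap_of_isCompact hTGcpt T' hT'cpt hT'closed
    have hPconn : IsConnected (P : Set G) := hconn_comap T' hT'conn
    -- commutators of G with P land in TG
    have hcomm : ∀ g : G, ∀ p ∈ P, g * p * g⁻¹ * p⁻¹ ∈ TG := by
      intro g p hp
      have hc := Subgroup.mem_center_iff.mp (hT'c (Subgroup.mem_comap.mp hp)) (π g)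
      have h1 : π (g * p * g⁻¹ * p⁻¹) = 1 := by
        simp only [map_mul, map_inv]
        rw [hc]
        group
      exact (QuotientGroup.eq_one_iff _).mp h1
    -- the centralizer of P is open
    obtain ⟨U, hU, hUnss⟩ := lie_nss I G
    obtain ⟨U₀, hU₀sub, hU₀open, hU₀1⟩ := mem_nhds_iff.mp hU
    have hcont : Continuous (fun q : G × G => q.1 * q.2 * q.1⁻¹ * q.2⁻¹) := by fun_prop
    have hsub : ({1} : Set G) ×ˢ (P : Set G) ⊆
        (fun q : G × G => q.1 * q.2 * q.1⁻¹ * q.2⁻¹) ⁻¹' U₀ := by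
      rintro ⟨a, p⟩ ⟨ha, hp⟩
      rw [Set.mem_singleton_iff] at ha
      subst ha
      simp only [Set.mem_preimage]
      simpa using hU₀1
    obtain ⟨u, w, huo, hwo, h1u, hPw, huw⟩ :=
      generalized_tube_lemma isCompact_singleton hPcpt (hU₀open.preimage hcont) hsub
    have h1u' : (1 : G) ∈ u := h1u rfl
    have hukey : ∀ g ∈ u, ∀ p ∈ (P : Set G), g * p * g⁻¹ * p⁻¹ ∈ U₀ :=
      fun g hg p hp => huw (Set.mk_mem_prod hg (hPw hp))
    have hucent : ∀ g ∈ u, g ∈ Subgroup.centralizer (P : Set G) := by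
      intro g hg
      have hψmul : ∀ a b : ↥P, g * (↑(a * b) : G) * g⁻¹ * (↑(a * b) : G)⁻¹ =
          (g * a * g⁻¹ * (a : G)⁻¹) * (g * b * g⁻¹ * (b : G)⁻¹) := by
        intro a b
        have hcb := Subgroup.mem_center_iff.mp (hTGc (hcomm g b b.2))
        have h2 := hcb ((a : G)⁻¹)
        push_cast
        calc g * ((a : G) * b) * g⁻¹ * ((a : G) * b)⁻¹
            = (g * a * g⁻¹) * ((g * b * g⁻¹ * (b : G)⁻¹) * (a : G)⁻¹) := by group
          _ = (g * a * g⁻¹) * ((a : G)⁻¹ * (g * b * g⁻¹ * (b : G)⁻¹)) := by rw [← h2]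
          _ = (g * a * g⁻¹ * (a : G)⁻¹) * (g * b * g⁻¹ * (b : G)⁻¹) := by group
      let ψ : ↥P →* G :=
        { toFun := fun p => g * p * g⁻¹ * (p : G)⁻¹
          map_one' := by simp
          map_mul' := fun a b => hψmul a b }
      have hrange : (ψ.range : Set G) ⊆ U := by
        rintro x ⟨p, rfl⟩
        exact hU₀sub (hukey g hg p p.2)
      have hbot := hUnss ψ.range hrange
      rw [Subgroup.mem_centralizer_iff]
      intro p hp
      have hone : g * p * g⁻¹ * p⁻¹ = 1 := by
        have : ψ ⟨p, hp⟩ ∈ ψ.range := ⟨⟨p, hp⟩, rfl⟩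
        rw [hbot, Subgroup.mem_bot] at this
        exact this
      have : g * p = (g * p * g⁻¹ * p⁻¹) * (p * g) := by group
      rw [hone, one_mul] at this
      exact this.symm
    have hZopen : IsOpen (Subgroup.centralizer (P : Set G) : Set G) :=
      Subgroup.isOpen_of_mem_nhds _
        (Filter.mem_of_superset (huo.mem_nhds h1u') (fun g hg => hucent g hg))
    have hZclosed : IsClosed (Subgroup.centralizer (P : Set G) : Set G) :=
      Subgroup.isClosed_of_isOpen _ hZopen
    have hZuniv : (Subgroup.centralizer (P : Set G) : Set G) = Set.univ :=
      IsClopen.eq_univ ⟨hZclosed, hZopen⟩ ⟨1, one_mem _⟩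
    have hPcen : P ≤ Subgroup.center G := by
      intro p hp
      rw [Subgroup.mem_center_iff]
      intro g
      have hg : g ∈ Subgroup.centralizer (P : Set G) :=
        Set.eq_univ_iff_forall.mp hZuniv g
      exact (Subgroup.mem_centralizer_iff.mp hg p hp).symm
    have hPle : P ≤ TG := hTGmax P hPcen hPcpt hPconn
    have hback : T' = P.map π :=
      (Subgroup.map_comap_eq_self_of_surjective hπsurj T').symm
    have hTGbot : TG.map π = ⊥ := (Subgroup.map_eq_bot_iff TG).mpr
      (le_of_eq (QuotientGroup.ker_mk' TG).symm)
    rw [hback, ← le_bot_iff, ← hTGbot]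
    exact Subgroup.map_mono hPle
end

section
/- Let 𝔞 be an abelian subalgebra of 𝔤𝔩(n, ℂ) all of whose elements are semisimple (diagonalizable) matrices, and let θ ∈ GL(n, ℂ) normalize 𝔞 (i.e., θ 𝔞 θ⁻¹ = 𝔞). Then the restriction of Ad(θ) to 𝔞 has finite order: there exists k ≥ 1 such that Ad(θ)^k acts as the identity on 𝔞. -/
open Module Polynomial

attribute [local instance 100] LieRing.ofAssociativeRing

namespace AdFinOrderAux

variable {n : ℕ}

/-- Conjugation by a unit, as an algebra homomorphism. -/
noncomputable def conjAlgHom (u : (Matrix (Fin n) (Fin n) ℂ)ˣ) :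
    Matrix (Fin n) (Fin n) ℂ →ₐ[ℂ] Matrix (Fin n) (Fin n) ℂ where
  toFun M := ↑u * M * ↑(u⁻¹)
  map_one' := by
    show (↑u : Matrix (Fin n) (Fin n) ℂ) * 1 * (↑(u⁻¹) : Matrix (Fin n) (Fin n) ℂ) = 1
    rw [mul_one, Units.mul_inv]
  map_mul' M N := by simp only [mul_assoc, Units.inv_mul_cancel_left]
  map_zero' := by
    show (↑u : Matrix (Fin n) (Fin n) ℂ) * 0 * (↑(u⁻¹) : Matrix (Fin n) (Fin n) ℂ) = 0
    rw [mul_zero, zero_mul]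
  map_add' M N := by noncomm_ring
  commutes' r := by
    show (↑u : Matrix (Fin n) (Fin n) ℂ) * (algebraMap ℂ (Matrix (Fin n) (Fin n) ℂ) r) * (↑(u⁻¹) : Matrix (Fin n) (Fin n) ℂ)
      = algebraMap ℂ (Matrix (Fin n) (Fin n) ℂ) r
    rw [mul_assoc, Algebra.commutes r ((↑(u⁻¹) : Matrix (Fin n) (Fin n) ℂ)),
      Units.mul_inv_cancel_left]

lemma isSemisimple_toLin (M : Matrix (Fin n) (Fin n) ℂ) (u : (Matrix (Fin n) (Fin n) ℂ)ˣ)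
    (h : ((↑(u⁻¹) : Matrix (Fin n) (Fin n) ℂ) * M * (↑u : Matrix (Fin n) (Fin n) ℂ)).IsDiag) :
    Module.End.IsSemisimple (Matrix.toLinAlgEquiv' M : Module.End ℂ (Fin n → ℂ)) := by
  classical
  set D : Matrix (Fin n) (Fin n) ℂ :=
    (↑(u⁻¹) : Matrix (Fin n) (Fin n) ℂ) * M * (↑u : Matrix (Fin n) (Fin n) ℂ) with hD
  have hX : conjAlgHom u D = M := by
    show (↑u : Matrix (Fin n) (Fin n) ℂ) * D * (↑(u⁻¹) : Matrix (Fin n) (Fin n) ℂ) = M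
    rw [hD]
    simp only [mul_assoc, Units.mul_inv_cancel_left, Units.mul_inv, mul_one]
  set s : Finset ℂ := Finset.image D.diag Finset.univ with hs
  set p : ℂ[X] := ∏ c ∈ s, (Polynomial.X - Polynomial.C c) with hp
  have hsq : Squarefree p :=
    (Polynomial.separable_prod_X_sub_C_iff' (f := id) |>.mpr
      (fun x _ y _ hxy => hxy)).squarefree
  have hdiag : D = Matrix.diagonal D.diag := h.diagonal_diag.symm
  have haeD : aeval D p = 0 := by
    have hdal : D = Matrix.diagonalAlgHom (n := Fin n) (α := ℂ) ℂ D.diag := by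
      simpa using hdiag
    have hpi : aeval D.diag p = 0 := by
      rw [hp, map_prod]
      funext i
      rw [Finset.prod_apply]
      refine Finset.prod_eq_zero (Finset.mem_image_of_mem _ (Finset.mem_univ i)) ?_
      simp
    rw [hdal, aeval_algHom_apply, hpi, map_zero]
  have haeX : aeval M p = 0 := by
    rw [← hX, aeval_algHom_apply, haeD, map_zero]
  have hend : aeval (Matrix.toLinAlgEquiv' M) p = 0 := by
    rw [aeval_algHom_apply, haeX, map_zero]
  exact Module.End.isSemisimple_of_squarefree_aeval_eq_zero hsq hend

lemma exists_functional_eq {V : Type*} [AddCommGroup V] [Module ℂ V]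
    {ι₀ : Type*} [Finite ι₀] (f : V →ₗ[ℂ] ℂ) (g : ι₀ → V →ₗ[ℂ] ℂ)
    (h : ∀ x, ∃ j, f x = g j x) : ∃ j, ∀ x, f x = g j x := by
  have hcov : ⋃ j, ((LinearMap.ker (f - g j) : Submodule ℂ V) : Set V) = Set.univ := by
    ext x
    simpa [LinearMap.mem_ker, sub_eq_zero] using h x
  obtain ⟨j, hj⟩ := Subspace.exists_eq_top_of_iUnion_eq_univ hcov
  refine ⟨j, fun x => ?_⟩
  have hx : x ∈ LinearMap.ker (f - g j) := hj ▸ Submodule.mem_top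
  simpa [LinearMap.mem_ker, sub_eq_zero] using hx

lemma exists_simul_eigenbasis (𝔞 : LieSubalgebra ℂ (Matrix (Fin n) (Fin n) ℂ))
    (habelian : ∀ X ∈ 𝔞, ∀ Y ∈ 𝔞, X * Y = Y * X)
    (hss : ∀ X ∈ 𝔞, ∃ u : (Matrix (Fin n) (Fin n) ℂ)ˣ,
      ((↑(u⁻¹) : Matrix (Fin n) (Fin n) ℂ) * X * (↑u : Matrix (Fin n) (Fin n) ℂ)).IsDiag) :
    ∃ (ι₀ : Type) (_ : Fintype ι₀) (b : Basis ι₀ ℂ (Fin n → ℂ)),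
      ∀ X ∈ 𝔞, ∀ i, ∃ c : ℂ, X.mulVec (b i) = c • b i := by
  classical
  set f : 𝔞 → Module.End ℂ (Fin n → ℂ) :=
    fun X => Matrix.toLinAlgEquiv' (X : Matrix (Fin n) (Fin n) ℂ) with hf
  have hcomm : ∀ X Y : 𝔞, Commute (f X) (f Y) := fun X Y => by
    have h : Commute (X : Matrix (Fin n) (Fin n) ℂ) (Y : Matrix (Fin n) (Fin n) ℂ) :=
      habelian _ X.2 _ Y.2
    exact h.map Matrix.toLinAlgEquiv'
  have hsemi : ∀ X : 𝔞, Module.End.IsFinitelySemisimple (f X) := fun X => by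
    obtain ⟨u, hu⟩ := hss X X.2
    exact (isSemisimple_toLin _ u hu).isFinitelySemisimple
  have htop := Module.End.iSup_iInf_maxGenEigenspace_eq_top_of_iSup_maxGenEigenspace_eq_top_of_commute
    f (fun X Y _ => hcomm X Y) (fun X => Module.End.iSup_maxGenEigenspace_eq_top _)
  have hind := Module.End.independent_iInf_maxGenEigenspace_of_forall_mapsTo f
    (fun i j φ => Module.End.mapsTo_maxGenEigenspace_of_comm (hcomm j i) φ)
  have hInt : DirectSum.IsInternal (fun χ : 𝔞 → ℂ => ⨅ X, (f X).maxGenEigenspace (χ X)) :=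
    DirectSum.isInternal_submodule_of_iSupIndep_of_iSup_eq_top hind htop
  let bases := fun χ : 𝔞 → ℂ =>
    Module.Free.chooseBasis ℂ (↥(⨅ X, (f X).maxGenEigenspace (χ X)))
  let b := hInt.collectedBasis bases
  refine ⟨_, FiniteDimensional.fintypeBasisIndex b, b, ?_⟩
  intro X hX i
  refine ⟨i.1 ⟨X, hX⟩, ?_⟩
  have hmem : b i ∈ (f ⟨X, hX⟩).maxGenEigenspace (i.1 ⟨X, hX⟩) := by
    have h := hInt.collectedBasis_mem bases i
    exact (Submodule.mem_iInf _).mp h ⟨X, hX⟩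
  rw [(hsemi ⟨X, hX⟩).maxGenEigenspace_eq_eigenspace] at hmem
  have h := Module.End.mem_eigenspace_iff.mp hmem
  simpa [hf, Matrix.toLinAlgEquiv'_apply] using h

end AdFinOrderAux

/-- Let `𝔞` be an abelian Lie subalgebra of `𝔤𝔩(n, ℂ)` all of whose
elements are semisimple (diagonalizable) matrices, and let `θ ∈ GL(n, ℂ)` normalize `𝔞`,
i.e. `θ 𝔞 θ⁻¹ = 𝔞`.  Then the restriction of `Ad(θ)` to `𝔞` has finite order: there is
`k ≥ 1` with `Ad(θ)ᵏ = Ad(θᵏ)` acting as the identity on `𝔞`. -/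
theorem ad_restriction_finite_order
    {n : ℕ} (𝔞 : LieSubalgebra ℂ (Matrix (Fin n) (Fin n) ℂ))
    (habelian : ∀ X ∈ 𝔞, ∀ Y ∈ 𝔞, X * Y = Y * X)
    (hss : ∀ X ∈ 𝔞, ∃ u : (Matrix (Fin n) (Fin n) ℂ)ˣ,
      ((↑(u⁻¹) : Matrix (Fin n) (Fin n) ℂ) * X * (↑u : Matrix (Fin n) (Fin n) ℂ)).IsDiag)
    (θ : (Matrix (Fin n) (Fin n) ℂ)ˣ)
    (hnorm : (fun X => (↑θ : Matrix (Fin n) (Fin n) ℂ) * X *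
        (↑(θ⁻¹) : Matrix (Fin n) (Fin n) ℂ)) '' (𝔞 : Set (Matrix (Fin n) (Fin n) ℂ))
      = (𝔞 : Set (Matrix (Fin n) (Fin n) ℂ))) :
    ∃ k : ℕ, 1 ≤ k ∧ ∀ X ∈ 𝔞,
      (↑(θ ^ k) : Matrix (Fin n) (Fin n) ℂ) * X *
        (↑((θ ^ k)⁻¹) : Matrix (Fin n) (Fin n) ℂ) = X := by
  classical
  obtain ⟨ι₀, hι₀, b, hb⟩ := AdFinOrderAux.exists_simul_eigenbasis 𝔞 habelian hss
  haveI := hι₀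
  set V : Submodule ℂ (Matrix (Fin n) (Fin n) ℂ) := 𝔞.toSubmodule with hV
  have hmemθ : ∀ X ∈ 𝔞, (↑θ : Matrix (Fin n) (Fin n) ℂ) * X
      * (↑(θ⁻¹) : Matrix (Fin n) (Fin n) ℂ) ∈ 𝔞 := by
    intro X hX
    have h : (↑θ : Matrix (Fin n) (Fin n) ℂ) * X * (↑(θ⁻¹) : Matrix (Fin n) (Fin n) ℂ) ∈
        ((fun X => (↑θ : Matrix (Fin n) (Fin n) ℂ) * X *
          (↑(θ⁻¹) : Matrix (Fin n) (Fin n) ℂ)) '' (𝔞 : Set (Matrix (Fin n) (Fin n) ℂ))) :=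
      ⟨X, hX, rfl⟩
    rw [hnorm] at h
    exact h
  -- evaluation of a matrix on a fixed vector, linear in the matrix
  let evB : ι₀ → Matrix (Fin n) (Fin n) ℂ →ₗ[ℂ] (Fin n → ℂ) := fun i =>
    { toFun := fun Y => Y.mulVec (b i)
      map_add' := fun Y Z => Matrix.add_mulVec Y Z (b i)
      map_smul' := fun c Y => Matrix.smul_mulVec c Y (b i) }
  let F : ι₀ → (V →ₗ[ℂ] ℂ) := fun i => (b.coord i) ∘ₗ (evB i) ∘ₗ V.subtype
  have hFkey : ∀ (X : V) (i : ι₀),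
      (X : Matrix (Fin n) (Fin n) ℂ).mulVec (b i) = F i X • b i := by
    intro X i
    obtain ⟨c, hc⟩ := hb X X.2 i
    have hFc : F i X = c := by
      show b.coord i ((X : Matrix (Fin n) (Fin n) ℂ).mulVec (b i)) = c
      rw [hc, Basis.coord_apply, map_smul]
      simp
    rw [hFc, hc]
  -- Ad(θ) as a linear endomorphism of V
  let A : V →ₗ[ℂ] V :=
    { toFun := fun X => ⟨(↑θ : Matrix (Fin n) (Fin n) ℂ) * ↑X
        * (↑(θ⁻¹) : Matrix (Fin n) (Fin n) ℂ), hmemθ _ X.2⟩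
      map_add' := fun X Y => by
        apply Subtype.ext
        simp [mul_add, add_mul]
      map_smul' := fun c X => by
        apply Subtype.ext
        simp [mul_smul_comm, smul_mul_assoc] }
  have hA : ∀ X : V, ((A X : Matrix (Fin n) (Fin n) ℂ))
      = (↑θ : Matrix (Fin n) (Fin n) ℂ) * (X : Matrix (Fin n) (Fin n) ℂ)
        * (↑(θ⁻¹) : Matrix (Fin n) (Fin n) ℂ) :=
    fun X => rfl
  -- each F i ∘ A coincides with some F j
  have hstep : ∀ i, ∃ j, ∀ X : V, F i (A X) = F j X := by
    intro i
    refine AdFinOrderAux.exists_functional_eq ((F i) ∘ₗ A) F ?_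
    intro X
    set w : Fin n → ℂ := (↑(θ⁻¹) : Matrix (Fin n) (Fin n) ℂ).mulVec (b i) with hw
    set c : ℂ := F i (A X) with hc
    have h1 : ((A X : Matrix (Fin n) (Fin n) ℂ)).mulVec (b i) = c • b i := hFkey (A X) i
    have hE : (X : Matrix (Fin n) (Fin n) ℂ).mulVec w = c • w := by
      have e1 : ((↑(θ⁻¹) : Matrix (Fin n) (Fin n) ℂ)
          * ((↑θ : Matrix (Fin n) (Fin n) ℂ) * (X : Matrix (Fin n) (Fin n) ℂ)
            * (↑(θ⁻¹) : Matrix (Fin n) (Fin n) ℂ)))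
          = (X : Matrix (Fin n) (Fin n) ℂ) * (↑(θ⁻¹) : Matrix (Fin n) (Fin n) ℂ) := by
        rw [← mul_assoc, ← mul_assoc, Units.inv_mul, one_mul]
      calc (X : Matrix (Fin n) (Fin n) ℂ).mulVec w
          = ((↑X : Matrix (Fin n) (Fin n) ℂ)
              * (↑(θ⁻¹) : Matrix (Fin n) (Fin n) ℂ)).mulVec (b i) := by
            rw [hw, Matrix.mulVec_mulVec]
        _ = ((↑(θ⁻¹) : Matrix (Fin n) (Fin n) ℂ)
              * ((A X : Matrix (Fin n) (Fin n) ℂ))).mulVec (b i) := by rw [hA, e1]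
        _ = (↑(θ⁻¹) : Matrix (Fin n) (Fin n) ℂ).mulVec
              ((A X : Matrix (Fin n) (Fin n) ℂ).mulVec (b i)) := by
            rw [Matrix.mulVec_mulVec]
        _ = (↑(θ⁻¹) : Matrix (Fin n) (Fin n) ℂ).mulVec (c • b i) := by rw [h1]
        _ = c • w := by
            rw [hw]
            exact map_smul (Matrix.mulVecLin (↑(θ⁻¹) : Matrix (Fin n) (Fin n) ℂ)) c (b i)
    have hwne : w ≠ 0 := by
      intro h0
      have h2 : (↑θ : Matrix (Fin n) (Fin n) ℂ).mulVec w = b i := by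
        rw [hw, Matrix.mulVec_mulVec, Units.mul_inv, Matrix.one_mulVec]
      rw [h0, Matrix.mulVec_zero] at h2
      exact b.ne_zero i h2.symm
    have hexp : (X : Matrix (Fin n) (Fin n) ℂ).mulVec w
        = ∑ j, (b.repr w j * F j X) • b j := by
      conv_lhs => rw [← b.sum_repr w, ← Matrix.mulVecLin_apply]
      rw [map_sum]
      refine Finset.sum_congr rfl fun j _ => ?_
      rw [map_smul, Matrix.mulVecLin_apply, hFkey X j, smul_smul]
    have hexp2 : c • w = ∑ j, (c * b.repr w j) • b j := by
      conv_lhs => rw [← b.sum_repr w]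
      rw [Finset.smul_sum]
      exact Finset.sum_congr rfl fun j _ => (smul_smul c _ _)
    have h0 : ∑ j, ((b.repr w j * F j X) - (c * b.repr w j)) • b j = 0 := by
      simp only [sub_smul]
      rw [Finset.sum_sub_distrib, ← hexp, ← hexp2, hE, sub_self]
    have hco : ∀ j, b.repr w j * F j X = c * b.repr w j := fun j =>
      sub_eq_zero.mp (Fintype.linearIndependent_iff.mp b.linearIndependent _ h0 j)
    obtain ⟨j, hj⟩ : ∃ j, b.repr w j ≠ 0 := by
      by_contra hcon
      push_neg at hcon
      apply hwne
      have hz : b.repr w = 0 := by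
        ext j; exact hcon j
      exact (LinearEquiv.map_eq_zero_iff b.repr).mp hz
    refine ⟨j, ?_⟩
    have hcj := hco j
    rw [mul_comm c _] at hcj
    have : F j X = c := mul_left_cancel₀ hj hcj
    exact this.symm
  choose σ hσ using hstep
  -- iterate
  have hiter : ∀ (m : ℕ) (i : ι₀) (X : V), F i ((A ^ m) X) = F (σ^[m] i) X := by
    intro m
    induction m with
    | zero => intro i X; simp
    | succ m ih =>
      intro i X
      rw [pow_succ, Module.End.mul_apply, ih, hσ, Function.iterate_succ_apply']
  -- determination
  have hdet : ∀ Y Z : V, (∀ i, F i Y = F i Z)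
      → (Y : Matrix (Fin n) (Fin n) ℂ) = (Z : Matrix (Fin n) (Fin n) ℂ) := by
    intro Y Z h
    have hlin : Matrix.toLinAlgEquiv' (Y : Matrix (Fin n) (Fin n) ℂ)
        = Matrix.toLinAlgEquiv' (Z : Matrix (Fin n) (Fin n) ℂ) := by
      apply b.ext
      intro i
      rw [Matrix.toLinAlgEquiv'_apply, Matrix.toLinAlgEquiv'_apply, hFkey Y i, hFkey Z i, h i]
    exact Matrix.toLinAlgEquiv'.injective hlin
  -- matrix form of A ^ m
  have hApow : ∀ (m : ℕ) (X : V), ((A ^ m) X : Matrix (Fin n) (Fin n) ℂ)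
      = (↑(θ ^ m) : Matrix (Fin n) (Fin n) ℂ) * (X : Matrix (Fin n) (Fin n) ℂ)
        * (↑((θ ^ m)⁻¹) : Matrix (Fin n) (Fin n) ℂ) := by
    intro m
    induction m with
    | zero => intro X; simp
    | succ m ih =>
      intro X
      rw [pow_succ, Module.End.mul_apply, ih (A X), hA]
      have e1 : (↑(θ ^ (m + 1)) : Matrix (Fin n) (Fin n) ℂ)
          = (↑(θ ^ m) : Matrix (Fin n) (Fin n) ℂ) * (↑θ : Matrix (Fin n) (Fin n) ℂ) := by
        rw [pow_succ, Units.val_mul]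
      have e2 : (↑((θ ^ (m + 1))⁻¹) : Matrix (Fin n) (Fin n) ℂ)
          = (↑(θ⁻¹) : Matrix (Fin n) (Fin n) ℂ)
            * (↑((θ ^ m)⁻¹) : Matrix (Fin n) (Fin n) ℂ) := by
        rw [pow_succ, mul_inv_rev, Units.val_mul]
      rw [e1, e2]
      simp only [mul_assoc]
  -- pigeonhole, with ordering
  have main : ∀ p q : ℕ, p < q → σ^[p] = σ^[q] →
      ∃ k : ℕ, 1 ≤ k ∧ ∀ X ∈ 𝔞,
        (↑(θ ^ k) : Matrix (Fin n) (Fin n) ℂ) * X *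
          (↑((θ ^ k)⁻¹) : Matrix (Fin n) (Fin n) ℂ) = X := by
    intro p q hpq hfe
    refine ⟨q - p, by omega, ?_⟩
    intro X hX
    set Xv : V := ⟨X, hX⟩ with hXv
    have hAeq : ((A ^ p) Xv : Matrix (Fin n) (Fin n) ℂ)
        = ((A ^ q) Xv : Matrix (Fin n) (Fin n) ℂ) :=
      hdet _ _ (fun i => by rw [hiter p i Xv, hiter q i Xv, hfe])
    rw [hApow p Xv, hApow q Xv] at hAeq
    set k := q - p with hk
    have hqk : θ ^ q = θ ^ p * θ ^ k := by
      rw [← pow_add]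
      congr 1
      omega
    have hmain : (↑(θ ^ p) : Matrix (Fin n) (Fin n) ℂ)
        * ((↑(θ ^ k) : Matrix (Fin n) (Fin n) ℂ) * X
            * (↑((θ ^ k)⁻¹) : Matrix (Fin n) (Fin n) ℂ))
        * (↑((θ ^ p)⁻¹) : Matrix (Fin n) (Fin n) ℂ)
        = (↑(θ ^ p) : Matrix (Fin n) (Fin n) ℂ) * X
            * (↑((θ ^ p)⁻¹) : Matrix (Fin n) (Fin n) ℂ) := by
      have e3 : (↑(θ ^ q) : Matrix (Fin n) (Fin n) ℂ)
          = (↑(θ ^ p) : Matrix (Fin n) (Fin n) ℂ)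
            * (↑(θ ^ k) : Matrix (Fin n) (Fin n) ℂ) := by
        rw [hqk, Units.val_mul]
      have e4 : (↑((θ ^ q)⁻¹) : Matrix (Fin n) (Fin n) ℂ)
          = (↑((θ ^ k)⁻¹) : Matrix (Fin n) (Fin n) ℂ)
            * (↑((θ ^ p)⁻¹) : Matrix (Fin n) (Fin n) ℂ) := by
        rw [hqk, mul_inv_rev, Units.val_mul]
      have hAeq' : (↑(θ ^ p) : Matrix (Fin n) (Fin n) ℂ) * X
          * (↑((θ ^ p)⁻¹) : Matrix (Fin n) (Fin n) ℂ)
          = (↑(θ ^ q) : Matrix (Fin n) (Fin n) ℂ) * X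
          * (↑((θ ^ q)⁻¹) : Matrix (Fin n) (Fin n) ℂ) := hAeq
      rw [hAeq', e3, e4]
      simp only [mul_assoc]
    have := congrArg (fun W => (↑((θ ^ p)⁻¹) : Matrix (Fin n) (Fin n) ℂ) * W
      * (↑(θ ^ p) : Matrix (Fin n) (Fin n) ℂ)) hmain
    simpa only [← mul_assoc, Units.inv_mul_cancel_left, mul_assoc, Units.inv_mul,
      Units.mul_inv, mul_one, Units.inv_mul_cancel_right, Units.mul_inv_cancel_right]
      using this
  obtain ⟨p, q, hpq, hfe⟩ := Finite.exists_ne_map_eq_of_infinite (fun m : ℕ => σ^[m])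
  rcases lt_or_gt_of_ne hpq with h | h
  · exact main p q h hfe
  · exact main q p h hfe.symm
end

section
/- Let φ: G → G be a continuous endomorphism of a Lie group G and H a closed subgroup with φ(H) ⊆ H, inducing a continuous map ψ on the quotient G/H with ψ∘π = π∘φ for the projection π: G → G/H. If ψ has no Li-Yorke pair and the restriction φ|_H has no Li-Yorke pair, then φ has no Li-Yorke pair. -/
open Filter

/-- `(a, b)` is a Li-Yorke pair for `T`: `a ≠ b` and there are `c` and subsequences
`n_l → ∞`, `n_k → ∞` with `(T^{n_l} a, T^{n_l} b) → (a, b)` and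
`(T^{n_k} a, T^{n_k} b) → (c, c)`. -/
def IsLiYorkePair {X : Type*} [TopologicalSpace X] (T : X → X) (a b : X) : Prop :=
  a ≠ b ∧ ∃ c : X,
    (∃ nl : ℕ → ℕ, Tendsto nl atTop atTop ∧
      Tendsto (fun j => (T^[nl j] a, T^[nl j] b)) atTop (nhds (a, b))) ∧
    (∃ nk : ℕ → ℕ, Tendsto nk atTop atTop ∧
      Tendsto (fun j => (T^[nk j] a, T^[nk j] b)) atTop (nhds (c, c)))

/-- Let `φ : G → G` be a continuous endomorphism of a Lie group `G` and
`H` a closed subgroup with `φ(H) ⊆ H`, inducing a continuous map `ψ` on the quotient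
`G/H` with `ψ ∘ π = π ∘ φ`.  If `ψ` has no Li-Yorke pair and the restriction `φ|_H` has
no Li-Yorke pair, then `φ` has no Li-Yorke pair. -/
theorem no_liYorkePair_of_quotient_and_restriction
    {E : Type*} [NormedAddCommGroup E] [NormedSpace ℝ E] [FiniteDimensional ℝ E]
    {M : Type*} [TopologicalSpace M] (I : ModelWithCorners ℝ E M)
    (G : Type*) [TopologicalSpace G] [ChartedSpace M G] [Group G] [LieGroup I (⊤ : ℕ∞) G]
    (φ : G →* G) (hφ : Continuous φ)
    (H : Subgroup G) (hclosed : IsClosed (H : Set G))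
    (hmap : ∀ x ∈ H, φ x ∈ H)
    (ψ : G ⧸ H → G ⧸ H) (hψ : Continuous ψ)
    (hcomm : ∀ g : G, ψ (QuotientGroup.mk g) = QuotientGroup.mk (φ g))
    (hψLY : ∀ a b : G ⧸ H, ¬ IsLiYorkePair ψ a b)
    (hHLY : ∀ a b : H, ¬ IsLiYorkePair (fun x : H => (⟨φ x, hmap x x.2⟩ : H)) a b) :
    ∀ a b : G, ¬ IsLiYorkePair (⇑φ) a b := by
  rintro a b ⟨hab, c, ⟨nl, hnl, hl⟩, ⟨nk, hnk, hk⟩⟩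
  by_cases hq : (QuotientGroup.mk a : G ⧸ H) = QuotientGroup.mk b
  · -- same coset: use the restriction to H
    have hH : a⁻¹ * b ∈ H := QuotientGroup.eq.mp hq
    set T : H → H := fun x => (⟨φ x, hmap x x.2⟩ : H) with hTdef
    have hTiter : ∀ (n : ℕ) (x : H), ((T^[n] x : H) : G) = φ^[n] (x : G) := by
      intro n
      induction n with
      | zero => intro x; simp
      | succ n ih =>
        intro x
        rw [Function.iterate_succ_apply', Function.iterate_succ_apply']
        have : ((T (T^[n] x) : H) : G) = φ ((T^[n] x : H) : G) := rfl
        rw [this, ih]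
    have hmul : ∀ n : ℕ, φ^[n] (a⁻¹ * b) = (φ^[n] a)⁻¹ * φ^[n] b := by
      intro n
      rw [iterate_map_mul, iterate_map_inv]
    haveI : IsTopologicalGroup G := topologicalGroup_of_lieGroup I (⊤ : ℕ∞)
    have hcont : Continuous fun p : G × G => p.1⁻¹ * p.2 :=
      (continuous_fst.inv).mul continuous_snd
    have h1 : Tendsto (fun j => φ^[nl j] (a⁻¹ * b)) atTop (nhds (a⁻¹ * b)) := by
      simpa [hmul, Function.comp_def] using (hcont.tendsto (a, b)).comp hl
    have h2 : Tendsto (fun j => φ^[nk j] (a⁻¹ * b)) atTop (nhds (1 : G)) := by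
      have := (hcont.tendsto (c, c)).comp hk
      simpa [hmul, Function.comp_def] using this
    refine hHLY ⟨a⁻¹ * b, hH⟩ 1 ⟨?_, 1, ⟨nl, hnl, ?_⟩, ⟨nk, hnk, ?_⟩⟩
    · intro h
      apply hab
      have : a⁻¹ * b = 1 := congrArg Subtype.val h
      rw [inv_mul_eq_one] at this
      exact this
    · have hfix : ∀ n : ℕ, T^[n] 1 = 1 := by
        intro n
        induction n with
        | zero => rfl
        | succ n ih =>
          rw [Function.iterate_succ_apply', ih]
          exact Subtype.ext (by simp [hTdef])
      refine Tendsto.prodMk_nhds ?_ ?_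
      · rw [Topology.IsEmbedding.subtypeVal.tendsto_nhds_iff]
        simpa [Function.comp_def, hTiter] using h1
      · simp only [hfix]
        exact tendsto_const_nhds
    · have hfix : ∀ n : ℕ, T^[n] 1 = 1 := by
        intro n
        induction n with
        | zero => rfl
        | succ n ih =>
          rw [Function.iterate_succ_apply', ih]
          exact Subtype.ext (by simp [hTdef])
      refine Tendsto.prodMk_nhds ?_ ?_
      · rw [Topology.IsEmbedding.subtypeVal.tendsto_nhds_iff]
        simpa [Function.comp_def, hTiter] using h2
      · simp only [hfix]
        exact tendsto_const_nhds
  · -- different cosets: use the quotient map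
    have hiter : ∀ (n : ℕ) (g : G), ψ^[n] (QuotientGroup.mk g) = QuotientGroup.mk (φ^[n] g) := by
      intro n
      induction n with
      | zero => intro g; rfl
      | succ n ih =>
        intro g
        rw [Function.iterate_succ_apply', Function.iterate_succ_apply', ih, hcomm]
    have hcontmk : Continuous (QuotientGroup.mk : G → G ⧸ H) := continuous_quotient_mk'
    refine hψLY (QuotientGroup.mk a) (QuotientGroup.mk b)
      ⟨hq, QuotientGroup.mk c, ⟨nl, hnl, ?_⟩, ⟨nk, hnk, ?_⟩⟩
    · have := ((hcontmk.prodMap hcontmk).tendsto (a, b)).comp hl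
      simpa [Function.comp_def, hiter] using this
    · have := ((hcontmk.prodMap hcontmk).tendsto (c, c)).comp hk
      simpa [Function.comp_def, hiter] using this
end

section
/- A linear map T: V → V on a finite-dimensional real vector space has no Li-Yorke pair. -/
open Filter

/-- A linear map on a finite-dimensional real normed vector space has
no Li-Yorke pair. -/
theorem no_liYorkePair_of_linearMap {V : Type*} [NormedAddCommGroup V] [NormedSpace ℝ V]
    [FiniteDimensional ℝ V] (T : V →ₗ[ℝ] V) :
    ∀ a b : V, ¬ IsLiYorkePair (⇑T) a b := by
  rintro a b ⟨hab, c, ⟨nl, hnl, hla⟩, ⟨nk, hnk, hkc⟩⟩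
  set v : V := a - b with hvdef
  have hvne : v ≠ 0 := sub_ne_zero.mpr hab
  have hla1 : Tendsto (fun j => T^[nl j] a) atTop (nhds a) :=
    (continuous_fst.tendsto _).comp hla
  have hla2 : Tendsto (fun j => T^[nl j] b) atTop (nhds b) :=
    (continuous_snd.tendsto _).comp hla
  have hkc1 : Tendsto (fun j => T^[nk j] a) atTop (nhds c) :=
    (continuous_fst.tendsto _).comp hkc
  have hkc2 : Tendsto (fun j => T^[nk j] b) atTop (nhds c) :=
    (continuous_snd.tendsto _).comp hkc
  have hiter : ∀ (n : ℕ) (x : V), T^[n] x = (T ^ n) x := fun n x => (Module.End.pow_apply T n x).symm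
  have hsub : ∀ n : ℕ, T^[n] a - T^[n] b = T^[n] v := by
    intro n; simp only [hiter, hvdef, map_sub]
  have hLv : Tendsto (fun j => T^[nl j] v) atTop (nhds v) := by
    have h := hla1.sub hla2
    simpa only [hsub] using h
  have hKv : Tendsto (fun j => T^[nk j] v) atTop (nhds 0) := by
    have h := hkc1.sub hkc2
    simpa only [hsub, sub_self] using h
  -- the invariant subspace spanned by the orbit of v
  set W : Submodule ℝ V := Submodule.span ℝ (Set.range fun n => T^[n] v) with hWdef
  have hWinv : ∀ x ∈ W, T x ∈ W := by
    intro x hx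
    induction hx using Submodule.span_induction with
    | mem x hx =>
        obtain ⟨n, rfl⟩ := hx
        exact Submodule.subset_span ⟨n + 1, Function.iterate_succ_apply' (⇑T) n v⟩
    | zero => simpa using Submodule.zero_mem W
    | add x y hx hy ihx ihy => simpa [map_add] using Submodule.add_mem W ihx ihy
    | smul a x hx ihx => simpa [map_smul] using Submodule.smul_mem W a ihx
  have hvW : v ∈ W := Submodule.subset_span ⟨0, rfl⟩
  have hTmCont : ∀ m : ℕ, Continuous (T^[m]) := by
    intro m
    have : Continuous ⇑(T ^ m) := (T ^ m).continuous_of_finiteDimensional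
    simpa [funext (hiter m)] using this
  -- pointwise convergence on all of W
  have hW0 : ∀ x ∈ W, Tendsto (fun j => T^[nk j] x) atTop (nhds 0) := by
    intro x hx
    induction hx using Submodule.span_induction with
    | mem x hx =>
        obtain ⟨m, rfl⟩ := hx
        have hcomm : ∀ j, T^[nk j] (T^[m] v) = T^[m] (T^[nk j] v) := by
          intro j
          rw [← Function.iterate_add_apply, Nat.add_comm, Function.iterate_add_apply]
        have := ((hTmCont m).tendsto 0).comp hKv
        have h0 : T^[m] (0 : V) = 0 := by simp [hiter m, map_zero]
        simpa [Function.comp_def, hcomm, h0] using this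
    | zero =>
        have : ∀ j, T^[nk j] (0 : V) = 0 := fun j => by simp [hiter, map_zero]
        simpa [this] using tendsto_const_nhds (α := V) (x := 0) (f := atTop (α := ℕ))
    | add x y hx hy ihx ihy =>
        have : ∀ j, T^[nk j] (x + y) = T^[nk j] x + T^[nk j] y := fun j => by
          simp [hiter, map_add]
        simpa [this] using ihx.add ihy
    | smul r x hx ihx =>
        have : ∀ j, T^[nk j] (r • x) = r • T^[nk j] x := fun j => by
          simp [hiter, map_smul]
        have h := ihx.const_smul r
        simpa [this] using h
  have hWid : ∀ x ∈ W, Tendsto (fun j => T^[nl j] x) atTop (nhds x) := by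
    intro x hx
    induction hx using Submodule.span_induction with
    | mem x hx =>
        obtain ⟨m, rfl⟩ := hx
        have hcomm : ∀ j, T^[nl j] (T^[m] v) = T^[m] (T^[nl j] v) := by
          intro j
          rw [← Function.iterate_add_apply, Nat.add_comm, Function.iterate_add_apply]
        have := ((hTmCont m).tendsto v).comp hLv
        simpa [Function.comp_def, hcomm] using this
    | zero =>
        have : ∀ j, T^[nl j] (0 : V) = 0 := fun j => by simp [hiter, map_zero]
        simpa [this] using tendsto_const_nhds (α := V) (x := 0) (f := atTop (α := ℕ))
    | add x y hx hy ihx ihy =>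
        have : ∀ j, T^[nl j] (x + y) = T^[nl j] x + T^[nl j] y := fun j => by
          simp [hiter, map_add]
        simpa [this] using ihx.add ihy
    | smul r x hx ihx =>
        have : ∀ j, T^[nl j] (r • x) = r • T^[nl j] x := fun j => by
          simp [hiter, map_smul]
        have h := ihx.const_smul r
        simpa [this] using h
  -- restrict T to W
  set S : W →ₗ[ℝ] W := T.restrict hWinv with hSdef
  have hSpow : ∀ (n : ℕ) (x : W), (((S ^ n) x : W) : V) = T^[n] (x : V) := by
    intro n
    induction n with
    | zero => intro x; simp
    | succ n ih =>
        intro x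
        rw [pow_succ', Function.iterate_succ_apply']
        have : (S ^ (n + 1)) x = S ((S ^ n) x) := by
          rw [pow_succ']; rfl
        calc (((S * S ^ n) x : W) : V) = ((S ((S ^ n) x) : W) : V) := rfl
          _ = T (((S ^ n) x : W) : V) := T.restrict_coe_apply hWinv _
          _ = T (T^[n] (x : V)) := by rw [ih x]
  have : Nontrivial W := by
    refine ⟨⟨v, hvW⟩, 0, ?_⟩
    intro h
    exact hvne (by simpa using congrArg (Subtype.val) h)
  have hrkpos : 0 < Module.finrank ℝ W := Module.finrank_pos
  set bW := Module.finBasis ℝ W with hbW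
  set M : ℕ → Matrix (Fin (Module.finrank ℝ W)) (Fin (Module.finrank ℝ W)) ℝ :=
    fun n => LinearMap.toMatrix bW bW (S ^ n) with hM
  -- coordinate functionals are continuous
  have hreprCont : ∀ i, Continuous fun x : W => (bW.repr x) i := by
    intro i
    exact ((Finsupp.lapply i).comp (bW.repr : W ≃ₗ[ℝ] _).toLinearMap).continuous_of_finiteDimensional
  -- convergence of the iterates in W
  have hWtendK : ∀ i', Tendsto (fun j => (S ^ nk j) (bW i')) atTop (nhds (0 : W)) := by
    intro i'
    rw [tendsto_subtype_rng]
    simpa [hSpow] using hW0 (bW i' : V) (bW i').2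
  have hWtendL : ∀ i', Tendsto (fun j => (S ^ nl j) (bW i')) atTop (nhds (bW i')) := by
    intro i'
    rw [tendsto_subtype_rng]
    simpa [hSpow] using hWid (bW i' : V) (bW i').2
  -- matrix convergence
  have hMK : Tendsto (fun j => M (nk j)) atTop (nhds 0) := by
    refine tendsto_pi_nhds.mpr ?_
    intro i
    rw [tendsto_pi_nhds]
    intro i'
    have := ((hreprCont i).tendsto (0 : W)).comp (hWtendK i')
    simpa [hM, LinearMap.toMatrix_apply, Function.comp_def] using this
  have hML : Tendsto (fun j => M (nl j)) atTop
      (nhds (LinearMap.toMatrix bW bW (1 : W →ₗ[ℝ] W))) := by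
    refine tendsto_pi_nhds.mpr ?_
    intro i
    rw [tendsto_pi_nhds]
    intro i'
    have := ((hreprCont i).tendsto (bW i')).comp (hWtendL i')
    simpa [hM, LinearMap.toMatrix_apply, Function.comp_def] using this
  -- determinants
  set d : ℝ := LinearMap.det S with hd
  have hdet : ∀ n : ℕ, (M n).det = d ^ n := by
    intro n
    rw [hM, LinearMap.det_toMatrix, hd, ← map_pow]
  have hdK : Tendsto (fun j => d ^ nk j) atTop (nhds 0) := by
    have h := (continuous_id.matrix_det.tendsto (0 :
      Matrix (Fin (Module.finrank ℝ W)) (Fin (Module.finrank ℝ W)) ℝ)).comp hMK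
    have hz : (0 : Matrix (Fin (Module.finrank ℝ W)) (Fin (Module.finrank ℝ W)) ℝ).det = 0 :=
      by haveI hne : Nonempty (Fin (Module.finrank ℝ W)) := ⟨⟨0, hrkpos⟩⟩; exact Matrix.det_zero
    simpa [Function.comp_def, hdet, hz] using h
  have hdL : Tendsto (fun j => d ^ nl j) atTop (nhds 1) := by
    have h := (continuous_id.matrix_det.tendsto
      (LinearMap.toMatrix bW bW (1 : W →ₗ[ℝ] W))).comp hML
    have h1 : (LinearMap.toMatrix bW bW (1 : W →ₗ[ℝ] W)).det = 1 := by
      rw [LinearMap.det_toMatrix]; simp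
    simpa [Function.comp_def, hdet, h1] using h
  -- contradiction
  have habs : |d| < 1 := by
    by_contra h
    push_neg at h
    have h1 : ∀ j, (1 : ℝ) ≤ |d ^ nk j| := by
      intro j
      rw [abs_pow]
      exact one_le_pow₀ h
    have h0 : Tendsto (fun j => |d ^ nk j|) atTop (nhds 0) := by
      have := (continuous_abs.tendsto (0 : ℝ)).comp hdK
      simpa [Function.comp_def] using this
    have := le_of_tendsto_of_tendsto' tendsto_const_nhds h0 h1
    linarith
  have hzero : Tendsto (fun j => d ^ nl j) atTop (nhds 0) :=
    (tendsto_pow_atTop_nhds_zero_of_abs_lt_one habs).comp hnl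
  have : (0 : ℝ) = 1 := tendsto_nhds_unique hzero hdL
  linarith
end
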